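/- arXiv:2211.03131 — 3 statements merged into one kernel-verified Lean document; each statement's English description precedes it below -/
import Mathlib

section
/- L²-orthogonality of the Ginzburg–Landau operator to gauge directions: let ε > 0, let u : ℝⁿ → ℂ and A : ℝⁿ → ℝⁿ be C², and let γ : ℝⁿ → ℝ be C² with compact support. Then ∫_{ℝⁿ} ( ⟨S_ε¹(u,A)(x), i u(x) γ(x)⟩ + ε² Σₖ (S_ε²(u,A))ₖ(x) ∂ₖγ(x) ) dx = 0. (No equation is assumed on (u,A); this expresses that S_ε(u,A) is orthogonal, in the ε-weighted L² pairing, to every gauge mode Θ_{(u,A)}[γ] = (iuγ, ∇γ).) -/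
/-!
Both parts of the pairing are total divergences. With the supercurrent `jₖ = ⟨∂ₖ^A u, iu⟩` and
the field strength `F = dA`: the potential term of `S_ε¹` is a real multiple of `u`, hence
orthogonal to `iu`, and since `∂ⱼ^A` is compatible with `⟨·,·⟩` while `⟨v, iv⟩ = 0`, one has
`⟨∂ⱼ^A ∂ⱼ^A u, iu⟩ = ∂ⱼ jⱼ`. Thus the integrand is
`−ε² Σⱼ ∂ⱼ(jⱼ γ) − ε⁴ Σⱼ ∂ⱼ(Σₖ Fⱼₖ ∂ₖγ)`, where the term `Σⱼₖ Fⱼₖ ∂ⱼ∂ₖγ` produced by the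
second divergence vanishes because `F` is antisymmetric and the Hessian of `γ` symmetric.
Divergences of compactly supported `C¹` fields integrate to zero.
-/

open Complex MeasureTheory

noncomputable section

/-- Partial derivative in the `j`-th coordinate direction. -/
def pd {n : ℕ} {E : Type*} [NormedAddCommGroup E] [NormedSpace ℝ E]
    (j : Fin n) (f : (Fin n → ℝ) → E) (x : Fin n → ℝ) : E :=
  fderiv ℝ f x (Pi.single j 1)

/-- Covariant partial derivative `∂ⱼ^A u = ∂ⱼu − iAⱼu`. -/
def covD {n : ℕ} (j : Fin n) (A : (Fin n → ℝ) → Fin n → ℝ)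
    (u : (Fin n → ℝ) → ℂ) (x : Fin n → ℝ) : ℂ :=
  pd j u x - Complex.I * (A x j : ℂ) * u x

/-- Real pairing `⟨v,w⟩ = Re (v * conj w)`. -/
def rpair (v w : ℂ) : ℝ := (v * (starRingEnd ℂ) w).re

/-- `S_ε¹(u,A) = −ε² Σⱼ ∂ⱼ^A(∂ⱼ^A u) − ½(1−|u|²)u`. -/
def GL1 {n : ℕ} (ε : ℝ) (u : (Fin n → ℝ) → ℂ) (A : (Fin n → ℝ) → Fin n → ℝ)
    (x : Fin n → ℝ) : ℂ :=
  -(ε : ℂ) ^ 2 * ∑ j : Fin n, covD j A (covD j A u) x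
    - (1 / 2 : ℂ) * ((1 - Complex.normSq (u x) : ℝ) : ℂ) * u x

/-- `(S_ε²(u,A))ₖ = −ε² Σⱼ ∂ⱼ(∂ⱼAₖ − ∂ₖAⱼ) − ⟨∂ₖ^A u, iu⟩`. -/
def GL2 {n : ℕ} (ε : ℝ) (u : (Fin n → ℝ) → ℂ) (A : (Fin n → ℝ) → Fin n → ℝ)
    (x : Fin n → ℝ) (k : Fin n) : ℝ :=
  -ε ^ 2 * ∑ j : Fin n,
      pd j (fun y => pd j (fun w => A w k) y - pd k (fun w => A w j) y) x
    - rpair (covD k A u x) (Complex.I * u x)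

section PartialDerivatives

variable {n : ℕ} {E : Type*} [NormedAddCommGroup E] [NormedSpace ℝ E]

lemma pd_mul {𝔸 : Type*} [NormedCommRing 𝔸] [NormedAlgebra ℝ 𝔸] {j : Fin n}
    {f g : (Fin n → ℝ) → 𝔸} {x : Fin n → ℝ} (hf : DifferentiableAt ℝ f x)
    (hg : DifferentiableAt ℝ g x) :
    pd j (fun y => f y * g y) x = pd j f x * g x + f x * pd j g x := by
  simp only [pd, fderiv_fun_mul hf hg, add_apply, smul_apply, smul_eq_mul]
  ring

lemma pd_const_mul {𝔸 : Type*} [NormedRing 𝔸] [NormedAlgebra ℝ 𝔸] {j : Fin n}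
    (c : 𝔸) {f : (Fin n → ℝ) → 𝔸} {x : Fin n → ℝ} (hf : DifferentiableAt ℝ f x) :
    pd j (fun y => c * f y) x = c * pd j f x := by
  simp [pd, fderiv_const_mul hf]

lemma pd_sum {ι : Type*} (s : Finset ι) {j : Fin n} {f : ι → (Fin n → ℝ) → E}
    {x : Fin n → ℝ} (hf : ∀ i ∈ s, DifferentiableAt ℝ (f i) x) :
    pd j (fun y => ∑ i ∈ s, f i y) x = ∑ i ∈ s, pd j (f i) x := by
  simp [pd, fderiv_fun_sum hf]

lemma pd_inner {F : Type*} [NormedAddCommGroup F] [InnerProductSpace ℝ F] {j : Fin n}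
    {f g : (Fin n → ℝ) → F} {x : Fin n → ℝ} (hf : DifferentiableAt ℝ f x)
    (hg : DifferentiableAt ℝ g x) :
    pd j (fun y => inner ℝ (f y) (g y)) x
      = inner ℝ (pd j f x) (g x) + inner ℝ (f x) (pd j g x) := by
  rw [pd, fderiv_inner_apply ℝ hf hg, add_comm]
  rfl

lemma contDiff_pd {m : ℕ} {j : Fin n} {f : (Fin n → ℝ) → E} (hf : ContDiff ℝ (m + 1) f) :
    ContDiff ℝ m (pd j f) :=
  (hf.fderiv_right le_rfl).clm_apply contDiff_const

lemma pd_eq_zero_of_notMem_tsupport {j : Fin n} {f : (Fin n → ℝ) → E} {x : Fin n → ℝ}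
    (hx : x ∉ tsupport f) : pd j f x = 0 := by
  simp [pd, fderiv_of_notMem_tsupport ℝ hx]

lemma pd_pd_comm {j k : Fin n} {f : (Fin n → ℝ) → E} (hf : ContDiff ℝ 2 f) (x : Fin n → ℝ) :
    pd j (pd k f) x = pd k (pd j f) x := by
  have hd : DifferentiableAt ℝ (fderiv ℝ f) x :=
    (hf.fderiv_right (m := 1) (by norm_num)).differentiable one_ne_zero x
  have pd_fderiv_apply : ∀ (i : Fin n) (v : Fin n → ℝ),
      pd i (fun y => fderiv ℝ f y v) x = fderiv ℝ (fderiv ℝ f) x (Pi.single i 1) v := by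
    intro i v
    simp [pd, fderiv_clm_apply hd (differentiableAt_const v)]
  change pd j (fun y => fderiv ℝ f y (Pi.single k 1)) x
      = pd k (fun y => fderiv ℝ f y (Pi.single j 1)) x
  rw [pd_fderiv_apply, pd_fderiv_apply,
    (hf.contDiffAt.isSymmSndFDerivAt (by simp)).eq]

lemma integrable_pd (j : Fin n) {g : (Fin n → ℝ) → ℝ} (hg : ContDiff ℝ 1 g)
    (hgc : HasCompactSupport g) : Integrable (pd j g) :=
  (contDiff_pd (m := 0) hg).continuous.integrable_of_hasCompactSupport (hgc.fderiv_apply ℝ _)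

lemma integral_pd_eq_zero (j : Fin n) {g : (Fin n → ℝ) → ℝ} (hg : ContDiff ℝ 1 g)
    (hgc : HasCompactSupport g) : ∫ x, pd j g x = 0 := by
  simpa [pd] using integral_mul_fderiv_eq_neg_fderiv_mul_of_integrable (μ := volume)
    (f := fun _ => (1 : ℝ)) (v := Pi.single j 1) (by simp)
    (by convert integrable_pd j hg hgc using 2 with x; simp [pd])
    (by simpa using hg.continuous.integrable_of_hasCompactSupport hgc)
    (fun _ _ => differentiableAt_const _) (fun x _ => hg.differentiable one_ne_zero x)

end PartialDerivatives

section Divergence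

variable {n : ℕ}

def divergence (G : Fin n → (Fin n → ℝ) → ℝ) (x : Fin n → ℝ) : ℝ :=
  ∑ j, pd j (G j) x

variable {G : Fin n → (Fin n → ℝ) → ℝ}

lemma integrable_divergence (hG : ∀ j, ContDiff ℝ 1 (G j))
    (hGc : ∀ j, HasCompactSupport (G j)) : Integrable (divergence G) :=
  integrable_finsetSum _ fun j _ => integrable_pd j (hG j) (hGc j)

lemma integral_divergence_eq_zero (hG : ∀ j, ContDiff ℝ 1 (G j))
    (hGc : ∀ j, HasCompactSupport (G j)) : ∫ x, divergence G x = 0 := by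
  simp only [divergence]
  rw [integral_finsetSum _ fun j _ => integrable_pd j (hG j) (hGc j)]
  exact Finset.sum_eq_zero fun j _ => integral_pd_eq_zero j (hG j) (hGc j)

lemma sum_sum_mul_eq_zero_of_antisymm_of_symm {ι R : Type*} [Fintype ι] [CommRing R]
    [IsAddTorsionFree R] {M H : ι → ι → R} (hM : ∀ j k, M j k = -M k j)
    (hH : ∀ j k, H j k = H k j) : ∑ j, ∑ k, M j k * H j k = 0 := by
  have hswap : ∑ j, ∑ k, M j k * H j k = ∑ j, ∑ k, -(M j k * H j k) := by
    rw [Finset.sum_comm]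
    exact Fintype.sum_congr _ _ fun j => Fintype.sum_congr _ _ fun k => by
      rw [hM k j, hH k j, neg_mul]
  simpa only [Finset.sum_neg_distrib, self_eq_neg] using hswap

lemma divergence_antisymm_mul_pd (F : Fin n → Fin n → (Fin n → ℝ) → ℝ)
    (hF : ∀ j k, Differentiable ℝ (F j k)) (hanti : ∀ j k y, F j k y = -F k j y)
    {γ : (Fin n → ℝ) → ℝ} (hγ : ContDiff ℝ 2 γ) (x : Fin n → ℝ) :
    divergence (fun j y => ∑ k, F j k y * pd k γ y) x
      = ∑ j, ∑ k, pd j (F j k) x * pd k γ x := by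
  have hpdγ : ∀ k, DifferentiableAt ℝ (pd k γ) x := fun k =>
    (contDiff_pd (m := 1) hγ).differentiable one_ne_zero x
  have hHessian : ∑ j, ∑ k, F j k x * pd j (pd k γ) x = 0 :=
    sum_sum_mul_eq_zero_of_antisymm_of_symm (fun j k => hanti j k x)
      (fun j k => pd_pd_comm hγ x)
  calc divergence (fun j y => ∑ k, F j k y * pd k γ y) x
      = ∑ j, ∑ k, (pd j (F j k) x * pd k γ x + F j k x * pd j (pd k γ) x) := by
        refine Fintype.sum_congr _ _ fun j => ?_
        exact (pd_sum (f := fun k y => F j k y * pd k γ y) _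
          fun k _ => (hF j k x).mul (hpdγ k)).trans
          (Fintype.sum_congr _ _ fun k => pd_mul (hF j k x) (hpdγ k))
    _ = ∑ j, ∑ k, pd j (F j k) x * pd k γ x := by
        simp only [Finset.sum_add_distrib, hHessian, add_zero]

end Divergence

section GinzburgLandau

variable {n : ℕ}

def supercurrent (A : (Fin n → ℝ) → Fin n → ℝ) (u : (Fin n → ℝ) → ℂ) (k : Fin n)
    (x : Fin n → ℝ) : ℝ :=
  rpair (covD k A u x) (I * u x)

def fieldStrength (A : (Fin n → ℝ) → Fin n → ℝ) (j k : Fin n) (x : Fin n → ℝ) : ℝ :=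
  pd j (fun y => A y k) x - pd k (fun y => A y j) x

variable {A : (Fin n → ℝ) → Fin n → ℝ} {u : (Fin n → ℝ) → ℂ} {γ : (Fin n → ℝ) → ℝ}

lemma rpair_eq_inner (v w : ℂ) : rpair v w = inner ℝ v w := by
  simp only [rpair, Complex.inner, mul_re, conj_re, conj_im]
  ring

lemma rpair_mul_I_self (z : ℂ) : rpair z (I * z) = 0 := by
  simp only [rpair, map_mul, conj_I, mul_re, mul_im, conj_re, conj_im, neg_re, neg_im, I_re, I_im]
  ring

lemma pd_rpair {j : Fin n} {f g : (Fin n → ℝ) → ℂ} {x : Fin n → ℝ}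
    (hf : DifferentiableAt ℝ f x) (hg : DifferentiableAt ℝ g x) :
    pd j (fun y => rpair (f y) (g y)) x = rpair (pd j f x) (g x) + rpair (f x) (pd j g x) := by
  simp only [rpair_eq_inner]
  exact pd_inner hf hg

-- the `iAⱼ` terms cancel because multiplication by `i` is skew for `⟨·,·⟩`
lemma pd_rpair_eq_covD {j : Fin n} {v w : (Fin n → ℝ) → ℂ}
    {x : Fin n → ℝ} (hv : DifferentiableAt ℝ v x) (hw : DifferentiableAt ℝ w x) :
    pd j (fun y => rpair (v y) (w y)) x
      = rpair (covD j A v x) (w x) + rpair (v x) (covD j A w x) := by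
  rw [pd_rpair hv hw]
  simp only [covD, rpair, map_sub, map_mul, conj_I, conj_ofReal, mul_re, mul_im,
    sub_re, sub_im, neg_re, neg_im, I_re, I_im, ofReal_re, ofReal_im, conj_re, conj_im]
  ring

lemma covD_I_mul {j : Fin n} {x : Fin n → ℝ} (hu : DifferentiableAt ℝ u x) :
    covD j A (fun y => I * u y) x = I * covD j A u x := by
  simp only [covD, pd_const_mul I hu]
  ring

lemma fieldStrength_antisymm (j k : Fin n) (x : Fin n → ℝ) :
    fieldStrength A j k x = -fieldStrength A k j x :=
  (neg_sub _ _).symm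

lemma GL2_eq (ε : ℝ) (x : Fin n → ℝ) (k : Fin n) :
    GL2 ε u A x k = -ε ^ 2 * ∑ j, pd j (fieldStrength A j k) x - supercurrent A u k x :=
  rfl

lemma contDiff_covD {m : ℕ} (hu : ContDiff ℝ (m + 1) u) (hA : ContDiff ℝ m A) (j : Fin n) :
    ContDiff ℝ m (covD j A u) :=
  (contDiff_pd hu).sub ((contDiff_const.mul
    (ofRealCLM.contDiff.comp (contDiff_pi.1 hA j))).mul (hu.of_le (by simp)))

lemma contDiff_supercurrent {m : ℕ} (hu : ContDiff ℝ (m + 1) u) (hA : ContDiff ℝ m A)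
    (k : Fin n) : ContDiff ℝ m (supercurrent A u k) := by
  change ContDiff ℝ m fun x => rpair (covD k A u x) (I * u x)
  simp only [rpair_eq_inner]
  exact (contDiff_covD hu hA k).inner ℝ (contDiff_const.mul (hu.of_le (by simp)))

lemma contDiff_fieldStrength {m : ℕ} (hA : ContDiff ℝ (m + 1) A)
    (j k : Fin n) : ContDiff ℝ m (fieldStrength A j k) :=
  (contDiff_pd (contDiff_pi.1 hA k)).sub (contDiff_pd (contDiff_pi.1 hA j))

lemma pd_supercurrent_self (hu : ContDiff ℝ 2 u) (hA : ContDiff ℝ 1 A) (j : Fin n)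
    (x : Fin n → ℝ) : pd j (supercurrent A u j) x = rpair (covD j A (covD j A u) x) (I * u x) := by
  have hdu : DifferentiableAt ℝ u x := hu.differentiable (by norm_num) x
  have hcovD : DifferentiableAt ℝ (covD j A u) x :=
    (contDiff_covD (m := 1) hu hA j).differentiable one_ne_zero x
  change pd j (fun y => rpair (covD j A u y) (I * u y)) x = _
  rw [pd_rpair_eq_covD (A := A) hcovD (hdu.const_mul I),
    covD_I_mul hdu, rpair_mul_I_self, add_zero]

lemma rpair_GL1_I_mul (ε c : ℝ) (x : Fin n → ℝ) :
    rpair (GL1 ε u A x) (I * u x * c)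
      = -ε ^ 2 * c * ∑ j, rpair (covD j A (covD j A u) x) (I * u x) := by
  have hGL1 : GL1 ε u A x = (-ε ^ 2) • ∑ j, covD j A (covD j A u) x
      - ((1 - normSq (u x)) / 2) • u x := by
    simp only [GL1, Complex.real_smul]
    push_cast
    ring
  have hc : I * u x * c = c • (I * u x) := by
    rw [Complex.real_smul]
    ring
  simp only [rpair_eq_inner, hGL1, hc, inner_sub_left, real_inner_smul_left,
    real_inner_smul_right, sum_inner]
  rw [← rpair_eq_inner (u x), rpair_mul_I_self]
  ring

lemma divergence_supercurrent_mul (hu : ContDiff ℝ 2 u) (hA : ContDiff ℝ 1 A)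
    (hγ : Differentiable ℝ γ) (x : Fin n → ℝ) :
    divergence (fun j y => supercurrent A u j y * γ y) x
      = (∑ j, rpair (covD j A (covD j A u) x) (I * u x)) * γ x
        + ∑ j, supercurrent A u j x * pd j γ x := by
  have hJ : ∀ j, DifferentiableAt ℝ (supercurrent A u j) x := fun j =>
    (contDiff_supercurrent (m := 1) hu hA j).differentiable one_ne_zero x
  simp only [divergence, pd_mul (hJ _) (hγ x), pd_supercurrent_self hu hA,
    Finset.sum_add_distrib, Finset.sum_mul]

lemma sum_GL2_mul_eq (ε : ℝ) (x : Fin n → ℝ) (b : Fin n → ℝ) :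
    ∑ k, GL2 ε u A x k * b k
      = -ε ^ 2 * ∑ j, ∑ k, pd j (fieldStrength A j k) x * b k
        - ∑ k, supercurrent A u k x * b k := by
  simp only [GL2_eq, sub_mul, Finset.sum_sub_distrib, mul_assoc, Finset.sum_mul,
    ← Finset.mul_sum]
  rw [Finset.sum_comm]

lemma gaugePairing_eq_divergence (ε : ℝ) (hu : ContDiff ℝ 2 u) (hA : ContDiff ℝ 2 A)
    (hγ : ContDiff ℝ 2 γ) (x : Fin n → ℝ) :
    rpair (GL1 ε u A x) (I * u x * (γ x : ℂ)) + ε ^ 2 * ∑ k, GL2 ε u A x k * pd k γ x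
      = -ε ^ 2 * divergence (fun j y => supercurrent A u j y * γ y) x
        - ε ^ 4 * divergence (fun j y => ∑ k, fieldStrength A j k y * pd k γ y) x := by
  rw [rpair_GL1_I_mul, sum_GL2_mul_eq,
    divergence_supercurrent_mul hu (hA.of_le one_le_two) (hγ.differentiable two_ne_zero),
    divergence_antisymm_mul_pd _
      (fun j k => (contDiff_fieldStrength (m := 1) hA j k).differentiable one_ne_zero)
      fieldStrength_antisymm hγ]
  ring

end GinzburgLandau

theorem statement4_general {n : ℕ} (ε : ℝ)
    (u : (Fin n → ℝ) → ℂ) (A : (Fin n → ℝ) → Fin n → ℝ) (γ : (Fin n → ℝ) → ℝ)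
    (hu : ContDiff ℝ 2 u) (hA : ContDiff ℝ 2 A)
    (hγ : ContDiff ℝ 2 γ) (hγc : HasCompactSupport γ) :
    ∫ x : Fin n → ℝ,
      (rpair (GL1 ε u A x) (Complex.I * u x * (γ x : ℂ))
        + ε ^ 2 * ∑ k : Fin n, GL2 ε u A x k * pd k γ x) = 0 := by
  have hJγ : ∀ j, ContDiff ℝ 1 fun y => supercurrent A u j y * γ y := fun j =>
    (contDiff_supercurrent hu (hA.of_le one_le_two) j).mul (hγ.of_le one_le_two)
  have hJγc : ∀ j, HasCompactSupport fun y => supercurrent A u j y * γ y := fun j =>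
    hγc.mul_left
  have hFγ : ∀ j, ContDiff ℝ 1 fun y => ∑ k, fieldStrength A j k y * pd k γ y := fun j =>
    ContDiff.sum fun k _ => (contDiff_fieldStrength hA j k).mul (contDiff_pd hγ)
  have hFγc : ∀ j, HasCompactSupport fun y => ∑ k, fieldStrength A j k y * pd k γ y :=
    fun j => hγc.mono' fun y hy => by_contra fun hyγ => hy <| by
      simp [pd_eq_zero_of_notMem_tsupport hyγ]
  simp_rw [gaugePairing_eq_divergence ε hu hA hγ]
  rw [integral_sub ((integrable_divergence hJγ hJγc).const_mul _)
    ((integrable_divergence hFγ hFγc).const_mul _), integral_const_mul, integral_const_mul,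
    integral_divergence_eq_zero hJγ hJγc, integral_divergence_eq_zero hFγ hFγc]
  ring

theorem statement4 {n : ℕ} (ε : ℝ) (hε : 0 < ε)
    (u : (Fin n → ℝ) → ℂ) (A : (Fin n → ℝ) → Fin n → ℝ) (γ : (Fin n → ℝ) → ℝ)
    (hu : ContDiff ℝ 2 u) (hA : ContDiff ℝ 2 A)
    (hγ : ContDiff ℝ 2 γ) (hγc : HasCompactSupport γ) :
    ∫ x : Fin n → ℝ,
      (rpair (GL1 ε u A x) (Complex.I * u x * (γ x : ℂ))
        + ε ^ 2 * ∑ k : Fin n, GL2 ε u A x k * pd k γ x) = 0 :=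
  statement4_general ε u A γ hu hA hγ hγc

end
end

section
/- Smooth extension of circle-minus-a-point valued maps (core of Lemma A.2 of the paper): let N be a smooth manifold (finite-dimensional, Hausdorff, second countable, without boundary), F ⊆ N a closed subset, U ⊆ N an open neighborhood of F, and z₀ a point of the unit circle S¹ = {z ∈ ℂ : |z| = 1}. If g : U → ℂ is smooth and g(x) ∈ S¹ ∖ {z₀} for every x ∈ U, then there exists a smooth map ḡ : N → ℂ with ḡ(x) ∈ S¹ ∖ {z₀} for every x ∈ N and ḡ(x) = g(x) for every x ∈ F. -/
/-!
The map `t ↦ -z₀ * exp (t * I)` is a diffeomorphism from `(-π, π)` onto `S¹ \ {z₀}`, with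
inverse `z ↦ arg (-(z / z₀))`, which is smooth because `-(z / z₀)` stays off the closed negative
real axis. So `g` lifts to a real angle function on `U` with values in the convex interval
`(-π, π)`. A smooth partition of unity extends such a convex-valued function from a
neighbourhood of `F` to all of `N` without leaving the interval, and composing back with the
exponential gives `ḡ`.
-/

open Manifold Set
open scoped ContDiff

section ConvexExtension

variable {E : Type*} [NormedAddCommGroup E] [NormedSpace ℝ E] [FiniteDimensional ℝ E]
  {F : Type*} [NormedAddCommGroup F] [NormedSpace ℝ F] {H : Type*} [TopologicalSpace H]
  {I : ModelWithCorners ℝ E H} {M : Type*} [TopologicalSpace M] [ChartedSpace H M]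
  [IsManifold I ∞ M] [T2Space M] [SigmaCompactSpace M] {n : ℕ∞}

theorem exists_contMDiff_forall_mem_convex_eqOn {s : Set F} (hs : Convex ℝ s) {c : F}
    (hc : c ∈ s) {A U : Set M} (hA : IsClosed A) (hU : IsOpen U) (hAU : A ⊆ U) {ψ : M → F}
    (hψ : ContMDiffOn I 𝓘(ℝ, F) n ψ U) (hψs : MapsTo ψ U s) :
    ∃ φ : M → F, ContMDiff I 𝓘(ℝ, F) n φ ∧ (∀ x, φ x ∈ s) ∧ EqOn φ ψ A := by
  classical
  let t : M → Set F := fun x => if x ∈ A then {ψ x} else s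
  have ht : ∀ x, Convex ℝ (t x) := fun x => by
    by_cases hx : x ∈ A <;> simp only [t, hx, if_true, if_false]
    exacts [convex_singleton _, hs]
  obtain ⟨φ, hφ⟩ := exists_contMDiffMap_forall_mem_convex_of_local I ht fun x => by
    by_cases hx : x ∈ U
    · refine ⟨U, hU.mem_nhds hx, ψ, hψ, fun y hy => ?_⟩
      by_cases hy' : y ∈ A <;> simp [t, hy', hψs hy]
    · refine ⟨Aᶜ, hA.isOpen_compl.mem_nhds fun h => hx (hAU h), fun _ => c,
        contMDiffOn_const, fun y hy => ?_⟩
      simp [t, show y ∉ A from hy, hc]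
  have hφA : EqOn φ ψ A := fun x hx => by simpa [t, hx] using hφ x
  refine ⟨φ, φ.contMDiff, fun x => ?_, hφA⟩
  by_cases hx : x ∈ A
  · exact hφA hx ▸ hψs (hAU hx)
  · simpa [t, hx] using hφ x

end ConvexExtension

namespace Complex

theorem contDiffAt_arg {z : ℂ} (hz : z ∈ slitPlane) {n : WithTop ℕ∞} : ContDiffAt ℝ n arg z := by
  have harg : arg = fun w => (log w).im := funext fun w => (log_im w).symm
  rw [harg]
  exact imCLM.contDiff.contDiffAt.comp z ((contDiffAt_log hz).restrict_scalars ℝ)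

theorem neg_mul_exp_mul_I_ne {w : ℂ} (hw : w ≠ 0) {t : ℝ} (ht : t ∈ Ioo (-Real.pi) Real.pi) :
    -w * exp (t * I) ≠ w := by
  intro hw'
  have h : exp (t * I) = -1 := mul_left_cancel₀ hw (by linear_combination -hw')
  have harg : arg (exp (t * I)) = t := by
    rw [exp_mul_I]
    exact arg_cos_add_sin_mul_I ⟨ht.1, ht.2.le⟩
  rw [h, arg_neg_one] at harg
  exact ht.2.ne' harg

open ComplexOrder in
theorem neg_div_mem_slitPlane {z w : ℂ} (hnorm : ‖z‖ = ‖w‖) (hne : z ≠ w) (hw : w ≠ 0) :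
    -(z / w) ∈ slitPlane := by
  rw [mem_slitPlane_iff_not_le_zero, neg_nonpos]
  intro hzw
  have hquot : z / w = 1 := by
    rw [eq_coe_norm_of_nonneg hzw, norm_div, hnorm, div_self (norm_ne_zero_iff.mpr hw), ofReal_one]
  exact hne ((div_eq_one_iff_eq hw).mp hquot)

theorem neg_mul_exp_arg_neg_div {z w : ℂ} (hnorm : ‖z‖ = ‖w‖) (hw : w ≠ 0) :
    -w * exp (arg (-(z / w)) * I) = z := by
  have hunit : ‖-(z / w)‖ = 1 := by
    rw [norm_neg, norm_div, hnorm, div_self (norm_ne_zero_iff.mpr hw)]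
  have h := norm_mul_exp_arg_mul_I (-(z / w))
  rw [hunit, ofReal_one, one_mul] at h
  rw [h]
  field_simp

end Complex

open Complex in
theorem statement11 (d : ℕ) (N : Type*) [TopologicalSpace N]
    [ChartedSpace (EuclideanSpace ℝ (Fin d)) N]
    [IsManifold (𝓡 d) (⊤ : ℕ∞) N] [T2Space N] [SecondCountableTopology N]
    (F : Set N) (hF : IsClosed F) (U : Set N) (hU : IsOpen U) (hFU : F ⊆ U)
    (z₀ : ℂ) (hz₀ : ‖z₀‖ = 1)
    (g : N → ℂ) (hg : ContMDiffOn (𝓡 d) 𝓘(ℝ, ℂ) (⊤ : ℕ∞) g U)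
    (hgval : ∀ x ∈ U, ‖g x‖ = 1 ∧ g x ≠ z₀) :
    ∃ gbar : N → ℂ,
      ContMDiff (𝓡 d) 𝓘(ℝ, ℂ) (⊤ : ℕ∞) gbar ∧
      (∀ x : N, ‖gbar x‖ = 1 ∧ gbar x ≠ z₀) ∧
      (∀ x ∈ F, gbar x = g x) := by
  have hz₀ne : z₀ ≠ 0 := norm_ne_zero_iff.mp (by rw [hz₀]; exact one_ne_zero)
  have hnorm : ∀ x ∈ U, ‖g x‖ = ‖z₀‖ := fun x hx => by rw [(hgval x hx).1, hz₀]
  have hslit : ∀ x ∈ U, -(g x / z₀) ∈ slitPlane := fun x hx =>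
    neg_div_mem_slitPlane (hnorm x hx) (hgval x hx).2 hz₀ne
  set θ : N → ℝ := fun x => arg (-(g x / z₀))
  have hθ : ContMDiffOn (𝓡 d) 𝓘(ℝ, ℝ) (⊤ : ℕ∞) θ U := fun x hx =>
    have hangle : ContDiffAt ℝ (⊤ : ℕ∞) (fun z => arg (-(z / z₀))) (g x) :=
      (contDiffAt_arg (hslit x hx)).comp (g x) (contDiff_id.div_const z₀).neg.contDiffAt
    (hangle.comp_contMDiffAt ((hg x hx).contMDiffAt (hU.mem_nhds hx))).contMDiffWithinAt
  have hθU : MapsTo θ U (Ioo (-Real.pi) Real.pi) := fun x hx =>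
    ⟨neg_pi_lt_arg _, (arg_le_pi _).lt_of_ne (slitPlane_arg_ne_pi (hslit x hx))⟩
  have : LocallyCompactSpace N := ChartedSpace.locallyCompactSpace (EuclideanSpace ℝ (Fin d)) N
  obtain ⟨q, hq, hqI, hqθ⟩ := exists_contMDiff_forall_mem_convex_eqOn (convex_Ioo _ _)
    ⟨neg_neg_of_pos Real.pi_pos, Real.pi_pos⟩ hF hU hFU hθ hθU
  have hexp : ContDiff ℝ (⊤ : ℕ∞) fun t : ℝ => -z₀ * exp (t * I) :=
    contDiff_const.mul ((contDiff_exp (𝕜 := ℂ) |>.restrict_scalars ℝ).comp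
      (ofRealCLM.contDiff.mul contDiff_const))
  refine ⟨fun x => -z₀ * exp (q x * I), hexp.comp_contMDiff hq, fun x => ⟨?_, ?_⟩, fun x hx => ?_⟩
  · rw [norm_mul, norm_neg, hz₀, norm_exp_ofReal_mul_I, one_mul]
  · exact neg_mul_exp_mul_I_ne hz₀ne (hqI x)
  · simp only [hqθ hx, θ]
    exact neg_mul_exp_arg_neg_div (hnorm x (hFU hx)) hz₀ne
end

section
/- The zero set of the perturbed vortex profile is a smooth graph (the concluding step in the proof of the main theorem): let m ≥ 1 and K > 0. Let u₀ : ℝ² → ℝ² be C¹ with u₀(0) = 0, with Du₀(0) invertible, and such that there exists c₀ > 0 with |u₀(τ)| ≥ c₀ min(|τ|, 1) for all τ ∈ ℝ². Let g : ℝᵐ → ℝ² and θ : ℝᵐ × ℝ² → ℝ² be C¹ with sup-norms of g, θ and of their first derivatives bounded by K. Then there exist ε₀, δ, C > 0, depending only on u₀ and K, such that for every ε ∈ (0, ε₀) the set { (y,z) ∈ ℝᵐ × ℝ² : |z| < δ and u₀((z − ε²g(y))/ε) + ε² θ(y, z/ε) = 0 } is exactly the graph { (y, ζ(y)) : y ∈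 ℝᵐ } of a C¹ map ζ : ℝᵐ → ℝ² satisfying |ζ(y) − ε²g(y)| ≤ Cε³ for all y ∈ ℝᵐ. -/
/-!
In the blown-up normal variable `w = (z - ε² g y) / ε` the equation reads
`u₀ w + ε² θ (y, ε g y + w) = 0`. On a small ball `u₀` is a Lipschitz perturbation of its
invertible differential `A`, and so is every fibre map `w ↦ u₀ w + ε² θ (y, ε g y + w)`, because
the `θ`-term is `ε² K`-Lipschitz. Hence each fibre map is injective on that ball and, by the
contraction argument behind the inverse function theorem, has a zero in it. The lower bound
`‖u₀ τ‖ ≥ c₀ min ‖τ‖ 1` confines every zero to `‖w‖ ≤ ε² K / c₀`, so the zero `τ y` is unique;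
the fibre derivative there is still close to `A`, so the implicit function theorem makes `τ` of
class `C¹`. The zero set is then the graph of `ζ = ε² g + ε τ`, and `‖ε τ‖ ≤ (K / c₀) ε³`.
-/

open Metric Set Topology
open scoped NNReal

section ApproximatesLinearOn

variable {𝕜 : Type*} [NontriviallyNormedField 𝕜]
  {E F : Type*} [NormedAddCommGroup E] [NormedSpace 𝕜 E] [NormedAddCommGroup F] [NormedSpace 𝕜 F]

theorem HasStrictFDerivAt.exists_approximatesLinearOn_closedBall {f : E → F} {f' : E →L[𝕜] F}
    {a : E} (hf : HasStrictFDerivAt f f' a) {c : ℝ≥0} (hc : 0 < c) :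
    ∃ r > 0, ApproximatesLinearOn f f' (closedBall a r) c := by
  obtain ⟨s, hs, hfs⟩ := hf.approximates_deriv_on_nhds (Or.inr hc)
  obtain ⟨r, hr, hrs⟩ := nhds_basis_closedBall.mem_iff.1 hs
  exact ⟨r, hr, hfs.mono_set hrs⟩

theorem ApproximatesLinearOn.norm_sub_le_of_hasFDerivAt {f : E → F} {A D : E →L[𝕜] F} {s : Set E}
    {c : ℝ≥0} {x : E} (hf : ApproximatesLinearOn f A s c) (hs : s ∈ 𝓝 x)
    (hD : HasFDerivAt f D x) : ‖D - A‖ ≤ c :=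
  (hD.sub A.hasFDerivAt).le_of_lipschitzOn hs hf.lipschitzOnWith

theorem ApproximatesLinearOn.add_lipschitzWith {f P : E → F} {A : E →L[𝕜] F} {s : Set E}
    {c L : ℝ≥0} (hf : ApproximatesLinearOn f A s c) (hP : LipschitzWith L P) :
    ApproximatesLinearOn (fun v ↦ f v + P v) A s (c + L) := by
  intro v hv w hw
  calc ‖f v + P v - (f w + P w) - A (v - w)‖ = ‖(f v - f w - A (v - w)) + (P v - P w)‖ := by
        congr 1; abel
    _ ≤ c * ‖v - w‖ + L * ‖v - w‖ := norm_add_le_of_le (hf v hv w hw) (hP.norm_sub_le v w)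
    _ = ↑(c + L) * ‖v - w‖ := by push_cast; ring

theorem ApproximatesLinearOn.exists_forall_eq_zero_iff [CompleteSpace E] {f : E → F}
    {A : E ≃L[𝕜] F} {c : ℝ≥0} {r : ℝ}
    (hf : ApproximatesLinearOn f (A : E →L[𝕜] F) (closedBall 0 r) c)
    (hc : c < ‖(A.symm : F →L[𝕜] E)‖₊⁻¹) (hr : 0 ≤ r)
    (hf0 : ‖f 0‖ ≤ (‖(A.symm : F →L[𝕜] E)‖₊⁻¹ - c) * r)
    (hzero : ∀ v, f v = 0 → v ∈ closedBall 0 r) :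
    ∃ w, ∀ v, f v = 0 ↔ v = w := by
  obtain ⟨w, -, hw⟩ := hf.surjOn_closedBall_of_nonlinearRightInverse A.toNonlinearRightInverse hr
    subset_rfl (by rw [mem_closedBall, dist_comm, dist_zero_right]; exact hf0)
  refine ⟨w, fun v ↦ ⟨fun hv ↦ ?_, fun hv ↦ hv ▸ hw⟩⟩
  exact hf.injOn (Or.inr hc) (hzero v hv) (hzero w hw) (hv.trans hw.symm)

end ApproximatesLinearOn

theorem ContinuousLinearEquiv.isInvertible_of_norm_sub_lt {𝕜 : Type*} [NontriviallyNormedField 𝕜]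
    {E : Type*} [NormedAddCommGroup E] [NormedSpace 𝕜 E] [CompleteSpace E]
    (A : E ≃L[𝕜] E) {D : E →L[𝕜] E} (h : ‖D - A‖ < ‖(A.symm : E →L[𝕜] E)‖⁻¹) :
    D.IsInvertible :=
  ⟨unitsEquiv 𝕜 E (Units.ofNearby ((unitsEquiv 𝕜 E).symm A) D h), rfl⟩

theorem norm_le_div_of_norm_apply_le {E F : Type*} [SeminormedAddCommGroup E]
    [SeminormedAddCommGroup F] {u : E → F} {c₀ b : ℝ} (hc₀ : 0 < c₀)
    (hlow : ∀ τ, c₀ * min ‖τ‖ 1 ≤ ‖u τ‖) {w : E} (hw : ‖u w‖ ≤ b) (hb : b < c₀) :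
    ‖w‖ ≤ b / c₀ := by
  have hmin : min ‖w‖ 1 ≤ b / c₀ := by
    rw [le_div_iff₀ hc₀, mul_comm]; exact (hlow w).trans hw
  rcases le_total ‖w‖ 1 with h | h
  · rwa [min_eq_left h] at hmin
  · rw [min_eq_right h, le_div_iff₀ hc₀] at hmin; linarith

section PerturbedProfile

variable {E : Type*} [NormedAddCommGroup E] [NormedSpace ℝ E] [CompleteSpace E]
  {u₀ P : E → E} {A : E ≃L[ℝ] E} {c₀ : ℝ}

theorem ApproximatesLinearOn.exists_forall_add_eq_zero_iff {r : ℝ} {η : ℝ≥0}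
    (hu : ApproximatesLinearOn u₀ (A : E →L[ℝ] E) (closedBall 0 r)
      (‖(A.symm : E →L[ℝ] E)‖₊⁻¹ / 4))
    (hu0 : u₀ 0 = 0) (hr : r ≤ 1) (hc₀ : 0 < c₀) (hlow : ∀ τ, c₀ * min ‖τ‖ 1 ≤ ‖u₀ τ‖)
    (hP : LipschitzWith η P) (hPb : ∀ v, ‖P v‖ ≤ η)
    (hη : (η : ℝ) < min (‖(A.symm : E →L[ℝ] E)‖⁻¹ * r / 4) (c₀ * r)) :
    ∃ w, ‖w‖ ≤ η / c₀ ∧ (∀ v, u₀ v + P v = 0 ↔ v = w) ∧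
      ∀ D : E →L[ℝ] E, HasFDerivAt (fun v ↦ u₀ v + P v) D w → D.IsInvertible := by
  set M := ‖(A.symm : E →L[ℝ] E)‖₊⁻¹ with hM
  have hηM : (η : ℝ) < M * r / 4 := by simpa [hM] using hη.trans_le (min_le_left _ _)
  have hηc : (η : ℝ) < c₀ * r := hη.trans_le (min_le_right _ _)
  have hr0 : 0 < r := pos_of_mul_pos_right (η.coe_nonneg.trans_lt hηc) hc₀.le
  have hM0 : (0 : ℝ) ≤ M := M.coe_nonneg
  have happrox := hu.add_lipschitzWith hP
  have hcM : ((M / 4 + η : ℝ≥0) : ℝ) < M := by push_cast; nlinarith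
  have hsmall (v) (hv : u₀ v + P v = 0) : ‖v‖ ≤ η / c₀ :=
    norm_le_div_of_norm_apply_le hc₀ hlow
      (by rw [eq_neg_of_add_eq_zero_left hv, norm_neg]; exact hPb v) (by nlinarith)
  have hρr : (η : ℝ) / c₀ < r := (div_lt_iff₀ hc₀).2 (by linarith)
  obtain ⟨w, hw⟩ := happrox.exists_forall_eq_zero_iff (NNReal.coe_lt_coe.1 hcM) hr0.le
    (by rw [hu0, zero_add]; refine (hPb 0).trans ?_; push_cast; nlinarith [η.coe_nonneg])
    (fun v hv ↦ mem_closedBall_zero_iff.2 ((hsmall v hv).trans hρr.le))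
  have hw0 := (hw w).2 rfl
  refine ⟨w, hsmall w hw0, hw, fun D hD ↦ A.isInvertible_of_norm_sub_lt ?_⟩
  have hball : closedBall (0 : E) r ∈ 𝓝 w :=
    closedBall_mem_nhds_of_mem (mem_ball_zero_iff.2 ((hsmall w hw0).trans_lt hρr))
  simpa [hM] using (happrox.norm_sub_le_of_hasFDerivAt hball hD).trans_lt hcM

theorem HasStrictFDerivAt.exists_forall_add_eq_zero_iff [Nontrivial E]
    (hu₀ : HasStrictFDerivAt u₀ (A : E →L[ℝ] E) 0) (hu₀0 : u₀ 0 = 0) (hc₀ : 0 < c₀)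
    (hlow : ∀ τ, c₀ * min ‖τ‖ 1 ≤ ‖u₀ τ‖) :
    ∃ κ > 0, ∀ {P : E → E} {η : ℝ≥0}, LipschitzWith η P → (∀ v, ‖P v‖ ≤ η) → (η : ℝ) < κ →
      ∃ w, ‖w‖ ≤ η / c₀ ∧ (∀ v, u₀ v + P v = 0 ↔ v = w) ∧
        ∀ D : E →L[ℝ] E, HasFDerivAt (fun v ↦ u₀ v + P v) D w → D.IsInvertible := by
  have hN_nnnorm : 0 < ‖(A.symm : E →L[ℝ] E)‖₊ :=
    A.subsingleton_or_nnnorm_symm_pos.resolve_left (not_subsingleton E)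
  have hN : 0 < ‖(A.symm : E →L[ℝ] E)‖ := hN_nnnorm
  obtain ⟨r, hr, hu⟩ := hu₀.exists_approximatesLinearOn_closedBall
    (c := ‖(A.symm : E →L[ℝ] E)‖₊⁻¹ / 4) (by positivity)
  refine ⟨min (‖(A.symm : E →L[ℝ] E)‖⁻¹ * min r 1 / 4) (c₀ * min r 1), by positivity,
    fun hP hPb hη ↦ ?_⟩
  exact (hu.mono_set (closedBall_subset_closedBall (min_le_left _ _))
    ).exists_forall_add_eq_zero_iff hu₀0 (min_le_right _ _) hc₀ hlow hP hPb hη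

end PerturbedProfile

theorem contDiff_of_forall_eq_zero_iff {𝕜 : Type*} [RCLike 𝕜]
    {Y E F : Type*} [NormedAddCommGroup Y] [NormedSpace 𝕜 Y] [CompleteSpace Y]
    [NormedAddCommGroup E] [NormedSpace 𝕜 E] [CompleteSpace E]
    [NormedAddCommGroup F] [NormedSpace 𝕜 F] [CompleteSpace F]
    {f : Y × E → F} {τ : Y → E} {n : WithTop ℕ∞} (hf : ContDiff 𝕜 n f) (hn : n ≠ 0)
    (hτ : ∀ y w, f (y, w) = 0 ↔ w = τ y)
    (hinv : ∀ y (D : E →L[𝕜] F), HasFDerivAt (fun w ↦ f (y, w)) D (τ y) → D.IsInvertible) :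
    ContDiff 𝕜 n τ := by
  refine contDiff_iff_contDiffAt.2 fun y₀ ↦ ?_
  have hf₀ : ContDiffAt 𝕜 n f (y₀, τ y₀) := hf.contDiffAt
  have hpartial : (fderiv 𝕜 f (y₀, τ y₀) ∘L .inr 𝕜 Y E).IsInvertible :=
    hinv y₀ _ ((hf₀.hasStrictFDerivAt hn).hasFDerivAt.comp (τ y₀)
      (hasFDerivAt_prodMk_right y₀ (τ y₀)))
  refine (hf₀.contDiffAt_implicitFunction hn hpartial).congr_of_eventuallyEq ?_
  filter_upwards [hf₀.eventually_apply_implicitFunction hn hpartial] with y hy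
  exact ((hτ y _).1 (hy.trans ((hτ y₀ _).2 rfl))).symm

theorem norm_sq_smul_add_smul_lt {E : Type*} [SeminormedAddCommGroup E] [NormedSpace ℝ E]
    {ε K C : ℝ} {a b : E} (hε : 0 < ε) (hε1 : ε < 1) (hK : 0 < K) (hC : 0 ≤ C) (ha : ‖a‖ ≤ K)
    (hb : ‖ε • b‖ ≤ C * ε ^ 3) : ‖ε ^ 2 • a + ε • b‖ < K + C := by
  have hε2 : ε ^ 2 < 1 := pow_lt_one₀ hε.le hε1 two_ne_zero
  have hε3 : ε ^ 3 < 1 := pow_lt_one₀ hε.le hε1 three_ne_zero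
  calc ‖ε ^ 2 • a + ε • b‖ ≤ ε ^ 2 * K + C * ε ^ 3 := by
        refine norm_add_le_of_le ?_ hb
        rw [norm_smul, Real.norm_of_nonneg (by positivity)]
        gcongr
    _ < K + C := by nlinarith

section Rescaling

variable {Y E : Type*} [NormedAddCommGroup E] [NormedSpace ℝ E]

theorem LipschitzWith.smul_comp_prodMk_add [PseudoEMetricSpace Y] {θ : Y × E → E} {K : ℝ≥0}
    (hθ : LipschitzWith K θ) (a : ℝ) (y : Y) (v : E) :
    LipschitzWith (‖a‖₊ * K) fun w ↦ a • θ (y, v + w) := by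
  have h := (lipschitzWith_smul a).comp
    (hθ.comp ((LipschitzWith.prodMk_left y).comp (isometry_add_left v).lipschitz))
  rwa [one_mul, mul_one] at h

/-- The profile equation in the blown-up normal variable `w = (z - ε² g y) / ε`. -/
def rescaledProfile (u₀ : E → E) (g : Y → E) (θ : Y × E → E) (ε : ℝ) (p : Y × E) : E :=
  u₀ p.2 + ε ^ 2 • θ (p.1, ε • g p.1 + p.2)

variable {u₀ : E → E} {g : Y → E} {θ : Y × E → E} {ε : ℝ}

theorem contDiff_rescaledProfile [NormedAddCommGroup Y] [NormedSpace ℝ Y] {n : WithTop ℕ∞}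
    (hu₀ : ContDiff ℝ n u₀) (hg : ContDiff ℝ n g) (hθ : ContDiff ℝ n θ) :
    ContDiff ℝ n (rescaledProfile u₀ g θ ε) := by
  unfold rescaledProfile
  fun_prop

theorem rescaledProfile_rescale (hε : ε ≠ 0) (y : Y) (z : E) :
    u₀ (ε⁻¹ • (z - ε ^ 2 • g y)) + ε ^ 2 • θ (y, ε⁻¹ • z) =
      rescaledProfile u₀ g θ ε (y, ε⁻¹ • (z - ε ^ 2 • g y)) := by
  have : ε • g y + ε⁻¹ • (z - ε ^ 2 • g y) = ε⁻¹ • z := by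
    rw [smul_sub, smul_smul, pow_two, ← mul_assoc, inv_mul_cancel₀ hε, one_mul, add_sub_cancel]
  rw [rescaledProfile, this]

theorem setOf_profile_eq_zero_eq_graph (hε : ε ≠ 0) {τ : Y → E} {δ : ℝ}
    (hτ : ∀ y w, rescaledProfile u₀ g θ ε (y, w) = 0 ↔ w = τ y)
    (hδ : ∀ y, ‖ε ^ 2 • g y + ε • τ y‖ < δ) :
    {p : Y × E | ‖p.2‖ < δ ∧ u₀ (ε⁻¹ • (p.2 - ε ^ 2 • g p.1)) + ε ^ 2 • θ (p.1, ε⁻¹ • p.2) = 0} =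
      {p | p.2 = ε ^ 2 • g p.1 + ε • τ p.1} := by
  ext ⟨y, z⟩
  simp only [mem_ofPred_eq, rescaledProfile_rescale hε, hτ, inv_smul_eq_iff₀ hε,
    sub_eq_iff_eq_add']
  exact ⟨And.right, fun h ↦ ⟨h ▸ hδ y, h⟩⟩

end Rescaling

theorem statement14_general (m : ℕ) (K : ℝ) (hK : 0 < K)
    (u₀ : EuclideanSpace ℝ (Fin 2) → EuclideanSpace ℝ (Fin 2))
    (hu₀ : ContDiff ℝ 1 u₀) (hu₀0 : u₀ 0 = 0)
    (hinv : Function.Bijective (fderiv ℝ u₀ 0))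
    (hlow : ∃ c₀ : ℝ, 0 < c₀ ∧
      ∀ τ : EuclideanSpace ℝ (Fin 2), c₀ * min ‖τ‖ 1 ≤ ‖u₀ τ‖) :
    ∃ ε₀ δ C : ℝ, 0 < ε₀ ∧ 0 < δ ∧ 0 < C ∧
      ∀ (g : EuclideanSpace ℝ (Fin m) → EuclideanSpace ℝ (Fin 2))
        (θ : EuclideanSpace ℝ (Fin m) × EuclideanSpace ℝ (Fin 2) →
              EuclideanSpace ℝ (Fin 2)),
        ContDiff ℝ 1 g → ContDiff ℝ 1 θ →
        (∀ y, ‖g y‖ ≤ K) → (∀ y, ‖fderiv ℝ g y‖ ≤ K) →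
        (∀ p, ‖θ p‖ ≤ K) → (∀ p, ‖fderiv ℝ θ p‖ ≤ K) →
        ∀ ε : ℝ, 0 < ε → ε < ε₀ →
          ∃ ζ : EuclideanSpace ℝ (Fin m) → EuclideanSpace ℝ (Fin 2),
            ContDiff ℝ 1 ζ ∧
            (∀ y, ‖ζ y - ε ^ 2 • g y‖ ≤ C * ε ^ 3) ∧
            {p : EuclideanSpace ℝ (Fin m) × EuclideanSpace ℝ (Fin 2) |
                ‖p.2‖ < δ ∧
                u₀ (ε⁻¹ • (p.2 - ε ^ 2 • g p.1)) + ε ^ 2 • θ (p.1, ε⁻¹ • p.2) = 0}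
              = {p : EuclideanSpace ℝ (Fin m) × EuclideanSpace ℝ (Fin 2) |
                  p.2 = ζ p.1} := by
  obtain ⟨c₀, hc₀, hlow⟩ := hlow
  lift K to ℝ≥0 using hK.le
  have hA : HasStrictFDerivAt u₀ (ContinuousLinearEquiv.ofBijective (fderiv ℝ u₀ 0)
      (LinearMap.ker_eq_bot.2 hinv.1) (LinearMap.range_eq_top.2 hinv.2) :
        EuclideanSpace ℝ (Fin 2) →L[ℝ] EuclideanSpace ℝ (Fin 2)) 0 := by
    rw [ContinuousLinearEquiv.coe_ofBijective]
    exact hu₀.contDiffAt.hasStrictFDerivAt one_ne_zero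
  obtain ⟨κ, hκ, hfibre⟩ := hA.exists_forall_add_eq_zero_iff hu₀0 hc₀ hlow
  refine ⟨min 1 (κ / K), K + K / c₀, K / c₀, by positivity, by positivity, by positivity, ?_⟩
  intro g θ hg hθ hgK _ hθK hθ'K ε hε hεε₀
  have hε1 : ε < 1 := hεε₀.trans_le (min_le_left _ _)
  have hεK : ε ^ 2 * K < κ := by
    have : ε * K < κ := (lt_div_iff₀ hK).1 (hεε₀.trans_le (min_le_right _ _))
    nlinarith
  have hη : ((‖ε ^ 2‖₊ * K : ℝ≥0) : ℝ) = ε ^ 2 * K := by simp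
  have hθlip : LipschitzWith K θ :=
    lipschitzWith_of_nnnorm_fderiv_le (hθ.differentiable one_ne_zero) hθ'K
  choose τ hτ_le hτ hτ_inv using fun y ↦ hfibre (hθlip.smul_comp_prodMk_add (ε ^ 2) y (ε • g y))
    (fun v ↦ by rw [norm_smul, hη, Real.norm_of_nonneg (sq_nonneg ε)]; gcongr; exact hθK _)
    (hη ▸ hεK)
  have hετ (y) : ‖ε • τ y‖ ≤ K / c₀ * ε ^ 3 := by
    rw [norm_smul, Real.norm_of_nonneg hε.le]
    calc ε * ‖τ y‖ ≤ ε * (ε ^ 2 * K / c₀) := by rw [← hη]; gcongr; exact hτ_le y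
      _ = K / c₀ * ε ^ 3 := by ring
  refine ⟨fun y ↦ ε ^ 2 • g y + ε • τ y, ?_, fun y ↦ by simpa using hετ y,
    setOf_profile_eq_zero_eq_graph hε.ne' hτ fun y ↦
      norm_sq_smul_add_smul_lt hε hε1 hK (by positivity) (hgK y) (hετ y)⟩
  exact (hg.const_smul _).add ((contDiff_of_forall_eq_zero_iff
    (contDiff_rescaledProfile hu₀ hg hθ) one_ne_zero hτ hτ_inv).const_smul ε)

theorem statement14 (m : ℕ) (hm : 1 ≤ m) (K : ℝ) (hK : 0 < K)
    (u₀ : EuclideanSpace ℝ (Fin 2) → EuclideanSpace ℝ (Fin 2))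
    (hu₀ : ContDiff ℝ 1 u₀) (hu₀0 : u₀ 0 = 0)
    (hinv : Function.Bijective (fderiv ℝ u₀ 0))
    (hlow : ∃ c₀ : ℝ, 0 < c₀ ∧
      ∀ τ : EuclideanSpace ℝ (Fin 2), c₀ * min ‖τ‖ 1 ≤ ‖u₀ τ‖) :
    ∃ ε₀ δ C : ℝ, 0 < ε₀ ∧ 0 < δ ∧ 0 < C ∧
      ∀ (g : EuclideanSpace ℝ (Fin m) → EuclideanSpace ℝ (Fin 2))
        (θ : EuclideanSpace ℝ (Fin m) × EuclideanSpace ℝ (Fin 2) →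
              EuclideanSpace ℝ (Fin 2)),
        ContDiff ℝ 1 g → ContDiff ℝ 1 θ →
        (∀ y, ‖g y‖ ≤ K) → (∀ y, ‖fderiv ℝ g y‖ ≤ K) →
        (∀ p, ‖θ p‖ ≤ K) → (∀ p, ‖fderiv ℝ θ p‖ ≤ K) →
        ∀ ε : ℝ, 0 < ε → ε < ε₀ →
          ∃ ζ : EuclideanSpace ℝ (Fin m) → EuclideanSpace ℝ (Fin 2),
            ContDiff ℝ 1 ζ ∧
            (∀ y, ‖ζ y - ε ^ 2 • g y‖ ≤ C * ε ^ 3) ∧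
            {p : EuclideanSpace ℝ (Fin m) × EuclideanSpace ℝ (Fin 2) |
                ‖p.2‖ < δ ∧
                u₀ (ε⁻¹ • (p.2 - ε ^ 2 • g p.1)) + ε ^ 2 • θ (p.1, ε⁻¹ • p.2) = 0}
              = {p : EuclideanSpace ℝ (Fin m) × EuclideanSpace ℝ (Fin 2) |
                  p.2 = ζ p.1} :=
  statement14_general m K hK u₀ hu₀ hu₀0 hinv hlow
end
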